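/- For r ∈ (0,1), the derivative of Λ₀⁰(r) = ∫₀^π log(1 + r cos θ) dθ equals -π(1 - √(1-r²))/(r·√(1-r²)). -/

import Mathlib

/-!
Near `r`, the integrand `log (1 + s cos θ)` has `s`-derivative `cos θ / (1 + s cos θ)`, bounded
uniformly because `1 + s cos θ ≥ 1 - |s|`; so one may differentiate under the integral sign.
Since `cos θ / (1 + r cos θ) = (1 - (1 + r cos θ)⁻¹) / r`, it remains to evaluate
`∫₀^π dθ / (1 + r cos θ) = π / √(1 - r²)`. Writing `1 + r cos θ` as a multiple of
`(1 + cos θ) + b² (1 - cos θ)` with `b = √(1 - r²) / (1 + r)`, this follows from an explicit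
antiderivative of `b / ((1 + cos θ) + b² (1 - cos θ))` that increases by `π / 2` over `[0, π]`.
-/

open Real

theorem one_sub_abs_le_one_add_mul_cos (x t : ℝ) : 1 - |x| ≤ 1 + x * cos t := by
  have h : |x * cos t| ≤ |x| := by
    rw [abs_mul]
    exact mul_le_of_le_one_right (abs_nonneg x) (abs_cos_le_one t)
  linarith [neg_abs_le (x * cos t)]

theorem one_add_mul_cos_pos {x : ℝ} (hx : |x| < 1) (t : ℝ) : 0 < 1 + x * cos t :=
  (sub_pos.2 hx).trans_le (one_sub_abs_le_one_add_mul_cos x t)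

theorem one_add_cos_add_mul_one_sub_cos_pos {a : ℝ} (ha : 0 < a) (θ : ℝ) :
    0 < (1 + cos θ) + a * (1 - cos θ) := by
  rcases (cos_le_one θ).eq_or_lt with h | h
  · rw [h]; norm_num
  · nlinarith [neg_one_le_cos θ]

/- On `(-π, π)` this antiderivative equals `arctan (b * tan (θ / 2))` (the half-angle
substitution), but unlike that one it is smooth across `θ = π`. -/
theorem hasDerivAt_half_add_arctan {b : ℝ} (hb : 0 < b) (θ : ℝ) :
    HasDerivAt (fun x => x / 2 + arctan ((b - 1) * sin x / ((1 + cos x) + b * (1 - cos x))))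
      (b / ((1 + cos θ) + b ^ 2 * (1 - cos θ))) θ := by
  have hD := (one_add_cos_add_mul_one_sub_cos_pos hb θ).ne'
  have hQ := (one_add_cos_add_mul_one_sub_cos_pos (pow_pos hb 2) θ).ne'
  have h : HasDerivAt
      (fun x => x / 2 + arctan ((b - 1) * sin x / ((1 + cos x) + b * (1 - cos x)))) _ θ :=
    ((hasDerivAt_id θ).div_const 2).add
      ((((hasDerivAt_sin θ).const_mul (b - 1)).div
        (((hasDerivAt_cos θ).const_add 1).add
          (((hasDerivAt_cos θ).const_sub 1).const_mul b)) hD).arctan)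
  refine h.congr_deriv ?_
  simp only [Pi.add_apply, Pi.div_apply]
  have hsc := sin_sq_add_cos_sq θ
  field_simp
  linear_combination -(b - 1) ^ 2 * ((1 + cos θ + b ^ 2 * (1 - cos θ)) + 2 * b) * hsc

theorem integral_div_one_add_cos_add_sq_mul_one_sub_cos {b : ℝ} (hb : 0 < b) :
    ∫ θ in (0 : ℝ)..π, b / ((1 + cos θ) + b ^ 2 * (1 - cos θ)) = π / 2 := by
  have hQ := one_add_cos_add_mul_one_sub_cos_pos (pow_pos hb 2)
  rw [intervalIntegral.integral_eq_sub_of_hasDerivAt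
    (fun θ _ => hasDerivAt_half_add_arctan hb θ)
    (Continuous.intervalIntegrable (by fun_prop (disch := exact fun θ => (hQ θ).ne')) _ _)]
  simp

theorem integral_inv_one_add_mul_cos {r : ℝ} (hr : |r| < 1) :
    ∫ θ in (0 : ℝ)..π, (1 + r * cos θ)⁻¹ = π / √(1 - r ^ 2) := by
  obtain ⟨hr₁, hr₂⟩ := abs_lt.1 hr
  have hw : 0 < √(1 - r ^ 2) := sqrt_pos.2 (by nlinarith)
  have hw₂ : √(1 - r ^ 2) ^ 2 = 1 - r ^ 2 := sq_sqrt (by nlinarith)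
  set w := √(1 - r ^ 2)
  have hr₀ : 0 < 1 + r := by linarith
  have hb : 0 < w / (1 + r) := div_pos hw hr₀
  have key (θ : ℝ) : (1 + r * cos θ)⁻¹ =
      2 / w * (w / (1 + r) / ((1 + cos θ) + (w / (1 + r)) ^ 2 * (1 - cos θ))) := by
    have hQ : (1 + cos θ) + (w / (1 + r)) ^ 2 * (1 - cos θ) = 2 * (1 + r * cos θ) / (1 + r) := by
      rw [div_pow, hw₂]
      field_simp
      ring
    have hpos := one_add_mul_cos_pos hr θ
    rw [hQ]
    field_simp
  simp_rw [key, intervalIntegral.integral_const_mul,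
    integral_div_one_add_cos_add_sq_mul_one_sub_cos hb]
  field_simp

theorem integral_cos_div_one_add_mul_cos {r : ℝ} (hr₀ : r ≠ 0) (hr : |r| < 1) :
    ∫ θ in (0 : ℝ)..π, cos θ / (1 + r * cos θ) =
      -π * (1 - √(1 - r ^ 2)) / (r * √(1 - r ^ 2)) := by
  have hpos := one_add_mul_cos_pos hr
  have key (θ : ℝ) : cos θ / (1 + r * cos θ) = r⁻¹ * (1 - (1 + r * cos θ)⁻¹) := by
    rw [← one_div (1 + r * cos θ), one_sub_div (hpos θ).ne']
    field_simp
    ring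
  have hint : IntervalIntegrable (fun θ => (1 + r * cos θ)⁻¹) MeasureTheory.volume 0 π :=
    Continuous.intervalIntegrable (by fun_prop (disch := exact fun θ => (hpos θ).ne')) _ _
  have hw : 0 < √(1 - r ^ 2) := sqrt_pos.2 (by nlinarith [abs_lt.1 hr])
  simp_rw [key, intervalIntegral.integral_const_mul,
    intervalIntegral.integral_sub intervalIntegrable_const hint, integral_inv_one_add_mul_cos hr,
    integral_one]
  field_simp
  ring

theorem hasDerivAt_integral_log_one_add_mul_cos {r : ℝ} (hr : |r| < 1) (a b : ℝ) :
    HasDerivAt (fun s => ∫ θ in a..b, log (1 + s * cos θ))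
      (∫ θ in a..b, cos θ / (1 + r * cos θ)) r := by
  set ε := (1 - |r|) / 2
  have hε : 0 < ε := by simp only [ε]; linarith
  have hball {x : ℝ} (hx : x ∈ Metric.ball r ε) : ε < 1 - |x| := by
    have := abs_sub_abs_le_abs_sub x r
    rw [Metric.mem_ball, dist_eq] at hx
    simp only [ε] at *
    linarith
  have hpos {x : ℝ} (hx : x ∈ Metric.ball r ε) (t : ℝ) : 0 < 1 + x * cos t :=
    hε.trans ((hball hx).trans_le (one_sub_abs_le_one_add_mul_cos x t))
  have hr' : r ∈ Metric.ball r ε := Metric.mem_ball_self hε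
  refine (intervalIntegral.hasDerivAt_integral_of_dominated_loc_of_deriv_le
    (F' := fun x t => cos t / (1 + x * cos t)) (bound := fun _ => ε⁻¹)
    (Metric.ball_mem_nhds r hε)
    (.of_forall fun x => (by fun_prop : Measurable _).aestronglyMeasurable) ?_ ?_ ?_
    intervalIntegrable_const ?_).2
  · exact Continuous.intervalIntegrable
      (by fun_prop (disch := exact fun t => (hpos hr' t).ne')) _ _
  · exact Continuous.aestronglyMeasurable
      (by fun_prop (disch := exact fun t => (hpos hr' t).ne'))
  · refine .of_forall fun t _ x hx => ?_
    rw [norm_div, norm_of_nonneg (hpos hx t).le]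
    calc ‖cos t‖ / (1 + x * cos t) ≤ 1 / ε := by
          gcongr
          · exact abs_cos_le_one t
          · exact (hball hx).le.trans (one_sub_abs_le_one_add_mul_cos x t)
      _ = ε⁻¹ := one_div ε
  · refine .of_forall fun t _ x hx => ?_
    simpa using (((hasDerivAt_id x).mul_const (cos t)).const_add 1).log (hpos hx t).ne'

/-- the derivative of Λ₀⁰(r) = ∫₀^π log(1 + r cos θ) dθ. -/
theorem stmt_9 (r : ℝ) (hr : r ∈ Set.Ioo (0 : ℝ) 1) :
    HasDerivAt (fun s => ∫ θ in (0 : ℝ)..π, Real.log (1 + s * Real.cos θ))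
      (-π * (1 - Real.sqrt (1 - r ^ 2)) / (r * Real.sqrt (1 - r ^ 2))) r := by
  have hr' : |r| < 1 := abs_lt.2 ⟨by linarith [hr.1], hr.2⟩
  rw [← integral_cos_div_one_add_mul_cos hr.1.ne' hr']
  exact hasDerivAt_integral_log_one_add_mul_cos hr' 0 π
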